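/- arXiv:1505.00810 — 2 statements merged into one kernel-verified Lean document; each statement's English description precedes it below -/
import Mathlib

section
/- For λ_u, λ_a, P̄_T, P_Tmax > 0, α > 2, and r_c = (P_Tmax/P̄_T)^{1/α}, the mean total received power 2πλ_u ∫_0^∞ min{P_Tmax r^{-α}, P̄_T} e^{-λ_a π r²} r dr equals (λ_u/λ_a)(1 - e^{-πλ_a r_c²}) P̄_T + πλ_u (πλ_a)^{α/2 - 1} P_Tmax Γ(1 - α/2, πλ_a r_c²), where Γ(s,x) = ∫_x^∞ t^{s-1} e^{-t} dt is the upper incomplete gamma function. -/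
open Real MeasureTheory

/-- Upper incomplete gamma function `Γ(s,x) = ∫_x^∞ t^{s-1} e^{-t} dt`. -/
noncomputable def upperGamma (s x : ℝ) : ℝ := ∫ t in Set.Ioi x, t ^ (s - 1) * Real.exp (-t)

/-!
With `b = π λ_a`, the truncated received power `min (P_Tmax r^{-α}) P̄_T` equals `P̄_T` exactly
for `r ≤ r_c`, so the integral splits at `r_c`. The near part `P̄_T ∫_0^{r_c} r e^{-b r²} dr` has
an elementary antiderivative. On the far part the substitution `t = b r²` turns
`r^{-α} e^{-b r²} r dr` into `t^{-α/2} e^{-t} dt / (2 b^{1-α/2})`, which integrates to the upper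
incomplete gamma function; the same substitution transfers integrability from `t^s e^{-t}` on
`(b r_c², ∞)`.
-/

open Set

lemma le_mul_rpow_neg_iff {A B α r : ℝ} (hA : 0 ≤ A) (hB : 0 < B) (hα : 0 < α) (hr : 0 < r) :
    B ≤ A * r ^ (-α) ↔ r ≤ (A / B) ^ (1 / α) := by
  rw [one_div, le_rpow_inv_iff_of_pos hr.le (by positivity) hα, rpow_neg hr.le, ← div_eq_mul_inv,
    le_div_iff₀ (by positivity), le_div_iff₀ hB, mul_comm]

lemma mul_rpow_neg_le_iff {A B α r : ℝ} (hA : 0 ≤ A) (hB : 0 < B) (hα : 0 < α) (hr : 0 < r) :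
    A * r ^ (-α) ≤ B ↔ (A / B) ^ (1 / α) ≤ r := by
  rw [one_div, rpow_inv_le_iff_of_pos (by positivity) hr.le hα, rpow_neg hr.le, ← div_eq_mul_inv,
    div_le_iff₀ (by positivity), div_le_iff₀ hB, mul_comm]

lemma integral_Ioc_mul_exp_neg_mul_sq {b c : ℝ} (hb : b ≠ 0) (hc : 0 ≤ c) :
    ∫ r in Ioc 0 c, r * exp (-(b * r ^ 2)) = (1 - exp (-(b * c ^ 2))) / (2 * b) := by
  have hderiv (r : ℝ) :
      HasDerivAt (fun r ↦ -exp (-(b * r ^ 2)) / (2 * b)) (r * exp (-(b * r ^ 2))) r := by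
    refine (((hasDerivAt_pow 2 r).const_mul b).neg.exp.neg.div_const (2 * b)).congr_deriv ?_
    simp only [Pi.neg_apply]
    field_simp
    ring
  rw [← intervalIntegral.integral_of_le hc, intervalIntegral.integral_eq_sub_of_hasDerivAt
    (fun r _ ↦ hderiv r) ((by fun_prop : Continuous _).intervalIntegrable _ _),
    zero_pow two_ne_zero, mul_zero, neg_zero, exp_zero]
  ring

lemma integrableOn_rpow_mul_exp_neg_Ioi (s : ℝ) {x : ℝ} (hx : 0 < x) :
    IntegrableOn (fun t ↦ t ^ s * exp (-t)) (Ioi x) := by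
  -- for `s > -1` this is a tail of Euler's integral, otherwise `t ^ s ≤ x ^ s` on `(x, ∞)`
  rcases lt_or_ge (-1) s with hs | hs
  · simpa [mul_comm] using
      (GammaIntegral_convergent (s := s + 1) (by linarith)).mono_set (Ioi_subset_Ioi hx.le)
  · refine Integrable.mono' ((exp_neg_integrableOn_Ioi x one_pos).const_mul (x ^ s))
      ((continuousOn_id.rpow_const fun t ht ↦ Or.inl (hx.trans ht).ne').mul
        continuous_neg.rexp.continuousOn |>.aestronglyMeasurable measurableSet_Ioi) ?_
    filter_upwards [ae_restrict_mem measurableSet_Ioi] with t ht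
    have ht0 : 0 < t := hx.trans ht
    rw [norm_of_nonneg (by positivity), neg_one_mul]
    exact mul_le_mul_of_nonneg_right (rpow_le_rpow_of_nonpos hx ht.le (by linarith))
      (exp_pos _).le

lemma image_const_mul_sq_Ioi {b c : ℝ} (hb : 0 < b) (hc : 0 ≤ c) :
    (fun r ↦ b * r ^ 2) '' Ioi c = Ioi (b * c ^ 2) := by
  ext t
  constructor
  · rintro ⟨r, hr, rfl⟩
    exact mul_lt_mul_of_pos_left (pow_lt_pow_left₀ hr hc two_ne_zero) hb
  · intro ht
    have ht' : c ^ 2 < t / b := by rw [lt_div_iff₀' hb]; exact ht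
    refine ⟨√(t / b), (lt_sqrt hc).2 ht', ?_⟩
    dsimp only
    rw [sq_sqrt ((sq_nonneg c).trans ht'.le), mul_div_cancel₀ _ hb.ne']

lemma hasDerivAt_const_mul_sq (b r : ℝ) : HasDerivAt (fun r ↦ b * r ^ 2) (2 * b * r) r :=
  ((hasDerivAt_pow 2 r).const_mul b).congr_deriv (by ring)

lemma injOn_const_mul_sq {b : ℝ} (hb : b ≠ 0) : InjOn (fun r ↦ b * r ^ 2) (Ici 0) :=
  fun _ hx _ hy hxy ↦ (pow_left_inj₀ hx hy two_ne_zero).1 (mul_left_cancel₀ hb hxy)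

lemma integral_Ioi_comp_const_mul_sq {b c : ℝ} (hb : 0 < b) (hc : 0 ≤ c) (g : ℝ → ℝ) :
    ∫ r in Ioi c, 2 * b * r * g (b * r ^ 2) = ∫ t in Ioi (b * c ^ 2), g t := by
  rw [← image_const_mul_sq_Ioi hb hc, integral_image_eq_integral_abs_deriv_smul measurableSet_Ioi
    (fun r _ ↦ (hasDerivAt_const_mul_sq b r).hasDerivWithinAt)
    ((injOn_const_mul_sq hb.ne').mono (Ioi_subset_Ici hc))]
  refine setIntegral_congr_fun measurableSet_Ioi fun r hr ↦ ?_
  have hr0 : 0 < r := hc.trans_lt hr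
  rw [abs_of_pos (by positivity), smul_eq_mul]

lemma integrableOn_Ioi_comp_const_mul_sq_iff {b c : ℝ} (hb : 0 < b) (hc : 0 ≤ c) (g : ℝ → ℝ) :
    IntegrableOn (fun r ↦ 2 * b * r * g (b * r ^ 2)) (Ioi c) ↔
      IntegrableOn g (Ioi (b * c ^ 2)) := by
  rw [← image_const_mul_sq_Ioi hb hc, integrableOn_image_iff_integrableOn_abs_deriv_smul
    measurableSet_Ioi
    (fun r _ ↦ (hasDerivAt_const_mul_sq b r).hasDerivWithinAt)
    ((injOn_const_mul_sq hb.ne').mono (Ioi_subset_Ici hc))]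
  refine integrableOn_congr_fun (fun r hr ↦ ?_) measurableSet_Ioi
  have hr0 : 0 < r := hc.trans_lt hr
  rw [abs_of_pos (by positivity), smul_eq_mul]

lemma two_mul_mul_rpow_mul_exp_const_mul_sq (α : ℝ) {b r : ℝ} (hb : 0 < b) (hr : 0 < r) :
    2 * b * r * ((b * r ^ 2) ^ (1 - α / 2 - 1) * exp (-(b * r ^ 2))) =
      2 * b ^ (1 - α / 2) * (r ^ (-α) * exp (-(b * r ^ 2)) * r) := by
  have hsq : (r ^ 2) ^ (-(α / 2)) = r ^ (-α) := by
    rw [← rpow_natCast, ← rpow_mul hr.le]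
    ring_nf
  rw [sub_sub_cancel_left, mul_rpow hb.le (sq_nonneg r), hsq, sub_eq_add_neg, rpow_add hb,
    rpow_one]
  ring

lemma integrableOn_Ioi_rpow_neg_mul_exp_neg_mul_sq (α : ℝ) {b c : ℝ} (hb : 0 < b) (hc : 0 < c) :
    IntegrableOn (fun r ↦ r ^ (-α) * exp (-(b * r ^ 2)) * r) (Ioi c) := by
  have h := (integrableOn_Ioi_comp_const_mul_sq_iff hb hc.le _).2
    (integrableOn_rpow_mul_exp_neg_Ioi (1 - α / 2 - 1) (by positivity : 0 < b * c ^ 2))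
  refine IntegrableOn.congr_fun (h.const_mul (2 * b ^ (1 - α / 2))⁻¹) (fun r hr ↦ ?_)
    measurableSet_Ioi
  rw [two_mul_mul_rpow_mul_exp_const_mul_sq α hb (hc.trans hr),
    inv_mul_cancel_left₀ (by positivity)]

lemma integral_Ioi_rpow_neg_mul_exp_neg_mul_sq (α : ℝ) {b c : ℝ} (hb : 0 < b) (hc : 0 ≤ c) :
    ∫ r in Ioi c, r ^ (-α) * exp (-(b * r ^ 2)) * r =
      upperGamma (1 - α / 2) (b * c ^ 2) / (2 * b ^ (1 - α / 2)) := by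
  rw [upperGamma, ← integral_Ioi_comp_const_mul_sq hb hc, eq_div_iff (by positivity), mul_comm,
    ← integral_const_mul]
  refine setIntegral_congr_fun measurableSet_Ioi fun r hr ↦ ?_
  rw [two_mul_mul_rpow_mul_exp_const_mul_sq α hb (hc.trans_lt hr)]

theorem meanTotalReceivedPower_general (lu la PT PTmax α rc : ℝ)
    (hla : 0 < la) (hPT : 0 < PT) (hPTmax : 0 < PTmax)
    (hα : 2 < α) (hrc : rc = (PTmax / PT) ^ (1 / α)) :
    2 * π * lu * ∫ r in Set.Ioi (0:ℝ),
        min (PTmax * r ^ (-α)) PT * Real.exp (-(la * π * r ^ 2)) * r =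
      lu / la * (1 - Real.exp (-(π * la * rc ^ 2))) * PT +
        π * lu * (π * la) ^ (α / 2 - 1) * PTmax * upperGamma (1 - α / 2) (π * la * rc ^ 2) := by
  set b := π * la
  have hb : 0 < b := by positivity
  have hα0 : 0 < α := by linarith
  have hrc0 : 0 < rc := hrc ▸ by positivity
  set f : ℝ → ℝ := fun r ↦ min (PTmax * r ^ (-α)) PT * exp (-(la * π * r ^ 2)) * r
  have hhead : EqOn f (fun r ↦ PT * (r * exp (-(b * r ^ 2)))) (Ioc 0 rc) := fun r hr ↦ by
    simp only [f, min_eq_right ((le_mul_rpow_neg_iff hPTmax.le hPT hα0 hr.1).2 (hrc ▸ hr.2)), b,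
      mul_comm π la]
    ring
  have htail : EqOn f (fun r ↦ PTmax * (r ^ (-α) * exp (-(b * r ^ 2)) * r)) (Ioi rc) :=
    fun r hr ↦ by
      simp only [f, min_eq_left ((mul_rpow_neg_le_iff hPTmax.le hPT hα0 (hrc0.trans hr)).2
        (hrc ▸ hr.le)), b, mul_comm π la]
      ring
  have hint_head : IntegrableOn f (Ioc 0 rc) :=
    (Continuous.integrableOn_Ioc (by fun_prop)).congr_fun hhead.symm measurableSet_Ioc
  have hint_tail : IntegrableOn f (Ioi rc) :=
    IntegrableOn.congr_fun ((integrableOn_Ioi_rpow_neg_mul_exp_neg_mul_sq α hb hrc0).const_mul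
      PTmax) htail.symm measurableSet_Ioi
  rw [← Ioc_union_Ioi_eq_Ioi hrc0.le, setIntegral_union (Ioc_disjoint_Ioi le_rfl)
    measurableSet_Ioi hint_head hint_tail, setIntegral_congr_fun measurableSet_Ioc hhead,
    setIntegral_congr_fun measurableSet_Ioi htail, integral_const_mul, integral_const_mul,
    integral_Ioc_mul_exp_neg_mul_sq hb.ne' hrc0.le,
    integral_Ioi_rpow_neg_mul_exp_neg_mul_sq α hb hrc0.le, show α / 2 - 1 = -(1 - α / 2) by ring,
    rpow_neg hb.le]
  field_simp
  ring

/-- Mean total received power (Lemma 1). -/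
theorem meanTotalReceivedPower (lu la PT PTmax α rc : ℝ)
    (hlu : 0 < lu) (hla : 0 < la) (hPT : 0 < PT) (hPTmax : 0 < PTmax)
    (hα : 2 < α) (hrc : rc = (PTmax / PT) ^ (1 / α)) :
    2 * π * lu * ∫ r in Set.Ioi (0:ℝ),
        min (PTmax * r ^ (-α)) PT * Real.exp (-(la * π * r ^ 2)) * r =
      lu / la * (1 - Real.exp (-(π * la * rc ^ 2))) * PT +
        π * lu * (π * la) ^ (α / 2 - 1) * PTmax * upperGamma (1 - α / 2) (π * la * rc ^ 2) :=
  meanTotalReceivedPower_general lu la PT PTmax α rc hla hPT hPTmax hα hrc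
end

section
/- For α > 2 and s > 0, the integral ∫_1^∞ 1/(1 + s^{-1} t^{α/2}) dt equals (2s/(α-2)) · ₂F₁(1, 1 - 2/α, 2 - 2/α, -s), where ₂F₁ is the Gauss hypergeometric function. -/
open Real MeasureTheory

/-- Gauss hypergeometric function `₂F₁(a,b,c,x)` via the Euler integral representation
(the analytic continuation valid for `c > b > 0` and `x < 1`). -/
noncomputable def hyp2F1 (a b c x : ℝ) : ℝ :=
  Real.Gamma c / (Real.Gamma b * Real.Gamma (c - b)) *
    ∫ t in (0:ℝ)..1, t ^ (b - 1) * (1 - t) ^ (c - b - 1) * (1 - x * t) ^ (-a)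

open Set

/-
Substituting `t = u ^ (-2/α)` maps `(0, 1)` onto `(1, ∞)` and turns the integrand into
`(2s/α) · u ^ (-2/α) / (1 + s u)`, since `(u ^ (-2/α)) ^ (α/2) = u⁻¹`. On the other side, for
`c = b + 1` the Euler integral of `₂F₁(1, b, c, -s)` loses its factor `(1 - t) ^ (c - b - 1)` and its
Gamma prefactor reduces to `Γ(b + 1) / Γ(b) = b`; with `b = 1 - 2/α` the two sides agree.
-/

theorem image_rpow_Ioo_zero_one_of_neg {p : ℝ} (hp : p < 0) :
    (fun x : ℝ => x ^ p) '' Ioo 0 1 = Ioi 1 := by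
  ext y
  constructor
  · rintro ⟨x, ⟨hx0, hx1⟩, rfl⟩
    exact (one_lt_rpow_iff_of_pos hx0).2 (Or.inr ⟨hx1, hp⟩)
  · intro hy
    have hy0 : 0 < y := zero_lt_one.trans hy
    exact ⟨y ^ p⁻¹, ⟨rpow_pos_of_pos hy0 _, rpow_lt_one_of_one_lt_of_neg hy (inv_lt_zero.2 hp)⟩,
      rpow_inv_rpow hy0.le hp.ne⟩

theorem integral_comp_rpow_Ioo_zero_one_of_neg {E : Type*} [NormedAddCommGroup E]
    [NormedSpace ℝ E] (g : ℝ → E) {p : ℝ} (hp : p < 0) :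
    ∫ x in Ioo 0 1, (-p * x ^ (p - 1)) • g (x ^ p) = ∫ y in Ioi 1, g y := by
  rw [← image_rpow_Ioo_zero_one_of_neg hp,
    integral_image_eq_integral_abs_deriv_smul measurableSet_Ioo
      (fun x hx => (hasDerivAt_rpow_const (Or.inl hx.1.ne')).hasDerivWithinAt)
      ((rpow_left_injOn hp.ne).mono fun x hx => le_of_lt hx.1)]
  refine setIntegral_congr_fun measurableSet_Ioo fun x hx => ?_
  rw [abs_mul, abs_of_neg hp, abs_of_pos (rpow_pos_of_pos hx.1 _)]

theorem hyp2F1_self_add_one (a : ℝ) {b : ℝ} (hb : 0 < b) (x : ℝ) :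
    hyp2F1 a b (b + 1) x = b * ∫ t in (0:ℝ)..1, t ^ (b - 1) * (1 - x * t) ^ (-a) := by
  have hΓ : Gamma b ≠ 0 := (Gamma_pos_of_pos hb).ne'
  simp only [hyp2F1, add_sub_cancel_left, sub_self, rpow_zero, mul_one, Gamma_one,
    Gamma_add_one hb.ne', mul_div_cancel_right₀ b hΓ]

theorem integral_Ioi_one_one_div_one_add_mul_rpow (α s : ℝ) (hα : 0 < α) (hs : 0 < s) :
    ∫ t in Ioi (1:ℝ), 1 / (1 + s⁻¹ * t ^ (α / 2)) =
      2 * s / α * ∫ u in (0:ℝ)..1, u ^ (-2 / α) * (1 + s * u)⁻¹ := by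
  have hp : -2 / α < 0 := div_neg_of_neg_of_pos (by norm_num) hα
  rw [← integral_comp_rpow_Ioo_zero_one_of_neg _ hp, intervalIntegral.integral_of_le zero_le_one,
    integral_Ioc_eq_integral_Ioo, ← integral_const_mul]
  refine setIntegral_congr_fun measurableSet_Ioo fun u hu => ?_
  have hu0 : 0 < u := hu.1
  have hpow : (u ^ (-2 / α)) ^ (α / 2) = u⁻¹ := by
    rw [← rpow_mul hu0.le, show -2 / α * (α / 2) = -1 by field_simp, rpow_neg_one]
  rw [smul_eq_mul, hpow, rpow_sub hu0, rpow_one]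
  field_simp
  ring

/-- `∫_1^∞ 1/(1 + s⁻¹ t^{α/2}) dt = (2s/(α-2)) ₂F₁(1, 1-2/α, 2-2/α, -s)`. -/
theorem integral_eq_hyp2F1 (α s : ℝ) (hα : 2 < α) (hs : 0 < s) :
    ∫ t in Set.Ioi (1:ℝ), 1 / (1 + s⁻¹ * t ^ (α / 2)) =
      2 * s / (α - 2) * hyp2F1 1 (1 - 2 / α) (2 - 2 / α) (-s) := by
  have hα0 : 0 < α := by linarith
  have hb : 0 < 1 - 2 / α := sub_pos.2 ((div_lt_one hα0).2 hα)
  have hF : hyp2F1 1 (1 - 2 / α) (2 - 2 / α) (-s) =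
      (1 - 2 / α) * ∫ u in (0:ℝ)..1, u ^ (-2 / α) * (1 + s * u)⁻¹ := by
    rw [show 2 - 2 / α = (1 - 2 / α) + 1 by ring, hyp2F1_self_add_one 1 hb]
    congr 1
    refine intervalIntegral.integral_congr fun u _ => ?_
    simp only [rpow_neg_one, neg_mul, sub_neg_eq_add]
    rw [show 1 - 2 / α - 1 = -2 / α by ring]
  rw [integral_Ioi_one_one_div_one_add_mul_rpow α s hα0 hs, hF, ← mul_assoc]
  congr 1
  field_simp [(by linarith : α - 2 ≠ 0)]
end
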